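/- arXiv:0803.0716 — 7 statements merged into one kernel-verified Lean document; each statement's English description precedes it below -/
import Mathlib

section
/- Let x₁, x₂, x₃, x₁₂, x₂₃, x₁₃ be quaternions with x₁₂ ≠ x₁, x₁₂ ≠ x₂, x₂₃ ≠ x₂, x₂₃ ≠ x₃, x₁₃ ≠ x₁ and x₁₃ ≠ x₃. Then (x₁₃−x₁)⁻¹(x₁₂−x₁)(x₁₂−x₂)⁻¹(x₂₃−x₂)(x₂₃−x₃)⁻¹(x₁₃−x₃) = 1 if and only if M₆(x₁, x₁₂, x₂, x₂₃, x₃, x₁₃) = −1. (This is the equivalence, in affine coordinates, between triviality of the holonomy of the induced connection around a white triangle and the multi-ratio condition; it is the core of Theorem 3.1, conditions (i) ⇔ (ii), characterizing Darboux transforms of immersed discrete surfaces in S⁴ = ℍP¹.) -/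
noncomputable section

/-- The multi-ratio of an ordered six-tuple of quaternions. -/
def M₆ (x₁ x₂ x₃ x₄ x₅ x₆ : Quaternion ℝ) : Quaternion ℝ :=
  (x₁ - x₂) * (x₂ - x₃)⁻¹ * (x₃ - x₄) * (x₄ - x₅)⁻¹ * (x₅ - x₆) * (x₆ - x₁)⁻¹

/-- Triviality of the holonomy around a white triangle, in affine coordinates, is
equivalent to the multi-ratio condition `M₆ = -1` (core of Theorem 3.1, (i) ⇔ (ii)). -/
theorem holonomy_trivial_iff_multiratio (x₁ x₂ x₃ x₁₂ x₂₃ x₁₃ : Quaternion ℝ)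
    (h1 : x₁₂ ≠ x₁) (h2 : x₁₂ ≠ x₂) (h3 : x₂₃ ≠ x₂) (h4 : x₂₃ ≠ x₃)
    (h5 : x₁₃ ≠ x₁) (h6 : x₁₃ ≠ x₃) :
    (x₁₃ - x₁)⁻¹ * (x₁₂ - x₁) * (x₁₂ - x₂)⁻¹ * (x₂₃ - x₂) * (x₂₃ - x₃)⁻¹ * (x₁₃ - x₃) = 1 ↔
      M₆ x₁ x₁₂ x₂ x₂₃ x₃ x₁₃ = -1 := by
  have ha : x₁₃ - x₁ ≠ 0 := sub_ne_zero.mpr h5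
  have hM : M₆ x₁ x₁₂ x₂ x₂₃ x₃ x₁₃ =
      -((x₁₂ - x₁) * (x₁₂ - x₂)⁻¹ * (x₂₃ - x₂) * (x₂₃ - x₃)⁻¹ * (x₁₃ - x₃) * (x₁₃ - x₁)⁻¹) := by
    unfold M₆
    rw [show x₁ - x₁₂ = -(x₁₂ - x₁) from (neg_sub _ _).symm,
        show x₂ - x₂₃ = -(x₂₃ - x₂) from (neg_sub _ _).symm,
        show x₃ - x₁₃ = -(x₁₃ - x₃) from (neg_sub _ _).symm]
    simp only [neg_mul, mul_neg, neg_neg]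
  rw [hM, neg_eq_iff_eq_neg, neg_neg, mul_assoc, mul_assoc, mul_assoc, mul_assoc,
      inv_mul_eq_one₀ ha, ← mul_assoc, ← mul_assoc, ← mul_assoc, mul_inv_eq_one₀ ha]
  exact eq_comm
end
end

section
/- Let L₁₂, L₁₃, L₂₃ be lines in ℍ² with L₁₃ ⊕ L₂₃ = ℍ². Suppose a₁, a₂, a₃, b₁, b₂, b₃ ∈ ℍ² satisfy, for each pair i < j from {1,2,3}: aᵢ − aⱼ ∈ L_{ij}, bᵢ − bⱼ ∈ L_{ij}, and bᵢ ≠ bⱼ. Then there exists a unique quaternion χ ∈ ℍ such that a₁ + b₁·χ = a₂ + b₂·χ = a₃ + b₃·χ. (This is the key step in the proof of Bianchi permutability, Theorem 5.5: the prolongations ψ̂♭ and ψ̂♯ of two Darboux transforms of a discrete surface combine, on each white triangle, into a common section ψ̂ = ψ̂♭ + ψ̂♯χ with one and the same χ for all three adjacent black triangles.) -/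
noncomputable section

/-- The quaternions. -/
abbrev H : Type := Quaternion ℝ

/-- `ℍ²`, pairs of quaternions, regarded as a right `ℍ`-module
(i.e. a module over the opposite ring `ℍᵐᵒᵖ`). -/
abbrev H2 : Type := Fin 2 → H

/-- Componentwise right multiplication of `v ∈ ℍ²` by a quaternion `q`. -/
def mulR (v : H2) (q : H) : H2 := fun i => v i * q

/-- A line in `ℍ²`: a one-dimensional right `ℍ`-submodule. -/
def IsLine (L : Submodule Hᵐᵒᵖ H2) : Prop :=
  ∃ v : H2, v ≠ 0 ∧ L = Submodule.span Hᵐᵒᵖ {v}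

lemma mulR_eq_smul (v : H2) (q : H) : mulR v q = MulOpposite.op q • v := by
  funext i
  simp [mulR, MulOpposite.smul_eq_mul_unop]

lemma mulR_cancel {v : H2} (hv : v ≠ 0) {q : H} (h : mulR v q = 0) : q = 0 := by
  obtain ⟨i, hi⟩ := Function.ne_iff.mp hv
  have := congrFun h i
  simp [mulR] at this
  rcases this with h' | h'
  · exact absurd h' hi
  · exact h'

lemma line_div {L : Submodule Hᵐᵒᵖ H2} (hL : IsLine L) {u v : H2}
    (hu : u ∈ L) (hv : v ∈ L) (hune : u ≠ 0) : ∃ q : H, v = mulR u q := by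
  obtain ⟨w, hw, rfl⟩ := hL
  rw [Submodule.mem_span_singleton] at hu hv
  obtain ⟨p, hp⟩ := hu
  obtain ⟨r, hr⟩ := hv
  have hp0 : p.unop ≠ 0 := by
    rintro h0
    apply hune
    rw [← hp]
    funext i
    simp [MulOpposite.smul_eq_mul_unop, h0]
  refine ⟨(p.unop)⁻¹ * r.unop, ?_⟩
  rw [← hp, ← hr]
  funext i
  simp only [mulR, Pi.smul_apply, MulOpposite.smul_eq_mul_unop]
  rw [mul_assoc, mul_inv_cancel_left₀ hp0]

lemma mulR_sub_right (v : H2) (p q : H) : mulR v (p - q) = mulR v p - mulR v q := by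
  funext i; simp [mulR, mul_sub]

lemma mulR_sub_left (u v : H2) (q : H) : mulR (u - v) q = mulR u q - mulR v q := by
  funext i; simp [mulR, sub_mul]

/-- Key step in Bianchi permutability (Theorem 5.5): on each white triangle there is a
unique quaternion `χ` with `a₁ + b₁χ = a₂ + b₂χ = a₃ + b₃χ`. -/
theorem bianchi_combination_unique
    (L₁₂ L₁₃ L₂₃ : Submodule Hᵐᵒᵖ H2)
    (h₁₂ : IsLine L₁₂) (h₁₃ : IsLine L₁₃) (h₂₃ : IsLine L₂₃)
    (hcompl : IsCompl L₁₃ L₂₃)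
    (a₁ a₂ a₃ b₁ b₂ b₃ : H2)
    (ha₁₂ : a₁ - a₂ ∈ L₁₂) (ha₁₃ : a₁ - a₃ ∈ L₁₃) (ha₂₃ : a₂ - a₃ ∈ L₂₃)
    (hb₁₂ : b₁ - b₂ ∈ L₁₂) (hb₁₃ : b₁ - b₃ ∈ L₁₃) (hb₂₃ : b₂ - b₃ ∈ L₂₃)
    (hne₁₂ : b₁ ≠ b₂) (hne₁₃ : b₁ ≠ b₃) (hne₂₃ : b₂ ≠ b₃) :
    ∃! χ : H, a₁ + mulR b₁ χ = a₂ + mulR b₂ χ ∧ a₂ + mulR b₂ χ = a₃ + mulR b₃ χ := by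
  have hb₁₂' : b₁ - b₂ ≠ 0 := sub_ne_zero.mpr hne₁₂
  have hb₁₃' : b₁ - b₃ ≠ 0 := sub_ne_zero.mpr hne₁₃
  have hb₂₃' : b₂ - b₃ ≠ 0 := sub_ne_zero.mpr hne₂₃
  obtain ⟨α, hα⟩ := line_div h₁₂ hb₁₂ ha₁₂ hb₁₂'
  obtain ⟨β, hβ⟩ := line_div h₂₃ hb₂₃ ha₂₃ hb₂₃'
  obtain ⟨γ, hγ⟩ := line_div h₁₃ hb₁₃ ha₁₃ hb₁₃'
  -- the key identity
  have key : mulR (b₁ - b₃) (α - γ) = mulR (b₂ - b₃) (α - β) := by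
    have e1 := fun i => congrFun hα i
    have e2 := fun i => congrFun hβ i
    have e3 := fun i => congrFun hγ i
    funext i
    have h1 := e1 i; have h2 := e2 i; have h3 := e3 i
    simp only [mulR, Pi.sub_apply] at h1 h2 h3 ⊢
    linear_combination (norm := noncomm_ring) h3 - h1 - h2
  have hmem13 : mulR (b₁ - b₃) (α - γ) ∈ L₁₃ := by
    rw [mulR_eq_smul]; exact Submodule.smul_mem _ _ hb₁₃
  have hmem23 : mulR (b₁ - b₃) (α - γ) ∈ L₂₃ := by
    rw [key, mulR_eq_smul]; exact Submodule.smul_mem _ _ hb₂₃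
  have hzero : mulR (b₂ - b₃) (α - β) = 0 := by
    rw [← key]
    exact (Submodule.disjoint_def.mp hcompl.disjoint) _ hmem13 hmem23
  have hβα : β = α := (sub_eq_zero.mp (mulR_cancel hb₂₃' hzero)).symm
  refine ⟨-α, ⟨?_, ?_⟩, ?_⟩
  · funext i
    have h1 := congrFun hα i
    simp only [mulR, Pi.sub_apply] at h1
    simp only [mulR, Pi.add_apply]
    linear_combination (norm := noncomm_ring) h1
  · funext i
    have h2 := congrFun hβ i
    rw [hβα] at h2
    simp only [mulR, Pi.sub_apply] at h2
    simp only [mulR, Pi.add_apply]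
    linear_combination (norm := noncomm_ring) h2
  · rintro χ ⟨h1, h2⟩
    have hz : mulR (b₁ - b₂) (χ + α) = 0 := by
      funext i
      have e1 := congrFun h1 i
      have eα := congrFun hα i
      simp only [mulR, Pi.add_apply, Pi.sub_apply, Pi.zero_apply] at e1 eα ⊢
      linear_combination (norm := noncomm_ring) e1 - eα
    have := mulR_cancel hb₁₂' hz
    exact eq_neg_of_add_eq_zero_left this
end
end

section
/- Let Γ be a finite-index subgroup of ℤ², let e₁ = (1,0), e₂ = (0,1), and let α₁, α₂, α₃ : ℤ² → ℍ∖{0} be Γ-periodic functions. Fix a ℤ-basis (γ, η) of Γ, which identifies the group of homomorphisms h : Γ → ℂˣ with ℂˣ × ℂˣ via h ↦ (h(γ), h(η)). Then there exists a polynomial p ∈ ℂ[X,Y], not identically zero, such that for every homomorphism h : Γ → ℂˣ the following are equivalent: (i) there exists a nonzero holomorphic section with monodromy h; (ii) p(h(γ), h(η)) = 0. Moreover the set of such h (the spectrum) is nonempty. (This is the content of Lemma 4.13: the spectrum of a quaternionic holomorphic line bundle over a discrete torus with regular combinatorics is a nonempty one-dimensional algebraic subset of Hom(Γ, ℂˣ)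 ≅ ℂˣ × ℂˣ.) -/
/-!
Reducing modulo `Γ`, a section with monodromy `h` is the same as a solution `f : ℤ²/Γ → ℍ` of a
finite linear system whose coefficients are values of `h`. Writing `ℍ = ℂ ⊕ jℂ` turns it into a
square complex system, and its determinant, after clearing denominators, is a polynomial `p` in
`h(γ), h(η)`. Along the line of characters `h_t(x) = t ^ (2 x₁ + x₂)`, a gauge transformation
makes the coefficients `1, t², t` constant, so the determinant is a polynomial `D(t)` with
`D(0) ≠ 0` (as `α₁ ≠ 0`) whose reciprocal `t ^ N D(1/t)` does not vanish at `0` either (as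
`α₂ ≠ 0`). Hence `D` is not constant and has a root `t ≠ 0`, a point of the spectrum, and `D` does
not vanish identically on `ℂˣ`, so `p ≠ 0`.
-/

noncomputable section

/-- The embedding of `ℂ` into the quaternions as the real subalgebra spanned by `1` and `i`. -/
def toH (z : ℂ) : H := ⟨z.re, z.im, 0, 0⟩

/-- The lattice vector `e₁ = (1,0)`. -/
def e₁ : ℤ × ℤ := (1, 0)

/-- The lattice vector `e₂ = (0,1)`. -/
def e₂ : ℤ × ℤ := (0, 1)

/-- `ψ : ℤ² → ℍ` is a holomorphic section with monodromy `h : Γ → ℂˣ` of the quaternionic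
holomorphic line bundle over the discrete torus `ℤ²/Γ` modeled by the coefficient
functions `α₁, α₂, α₃`. -/
def IsHoloSection (Γ : AddSubgroup (ℤ × ℤ)) (α₁ α₂ α₃ : ℤ × ℤ → H)
    (h : Γ → ℂˣ) (ψ : ℤ × ℤ → H) : Prop :=
  (∀ v : ℤ × ℤ, α₁ v * ψ v + α₂ v * ψ (v + e₁) + α₃ v * ψ (v + e₂) = 0) ∧
  (∀ x : ℤ × ℤ, ∀ g : Γ, ψ (x + (g : ℤ × ℤ)) = ψ x * toH (h g))

lemma toH_mul (z w : ℂ) : toH (z * w) = toH z * toH w := by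
  ext <;> simp only [Quaternion.re_mul, Quaternion.imI_mul, Quaternion.imJ_mul,
    Quaternion.imK_mul] <;> simp [toH]

lemma toH_one : toH 1 = 1 := by
  ext <;> simp [toH, Quaternion.re_one, Quaternion.imI_one, Quaternion.imJ_one, Quaternion.imK_one]

lemma toH_zero : toH 0 = 0 := by
  ext <;> simp [toH, Quaternion.re_zero, Quaternion.imI_zero, Quaternion.imJ_zero,
    Quaternion.imK_zero]

lemma toH_ne_zero {z : ℂ} (hz : z ≠ 0) : toH z ≠ 0 :=
  left_ne_zero_of_mul_eq_one (b := toH z⁻¹) (by rw [← toH_mul, mul_inv_cancel₀ hz, toH_one])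

/-- `ℍ = ℂ ⊕ jℂ` as a right `ℂ`-vector space: `x = z + j w ↦ (z, w)`. -/
def quatCoords : H ≃ₗ[ℝ] (Fin 2 → ℂ) where
  toFun x := ![⟨x.re, x.imI⟩, ⟨x.imJ, -x.imK⟩]
  invFun v := ⟨(v 0).re, (v 0).im, (v 1).re, -(v 1).im⟩
  map_add' x y := by ext i; fin_cases i <;> apply Complex.ext <;> simp; ring
  map_smul' r x := by ext i; fin_cases i <;> apply Complex.ext <;> simp
  left_inv x := by ext <;> simp
  right_inv v := by ext i; fin_cases i <;> simp

@[simp] lemma quatCoords_zero (x : H) : quatCoords x 0 = ⟨x.re, x.imI⟩ := rfl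

@[simp] lemma quatCoords_one (x : H) : quatCoords x 1 = ⟨x.imJ, -x.imK⟩ := rfl

def quatMatrix (α : H) : Matrix (Fin 2) (Fin 2) ℂ :=
  !![quatCoords α 0, -star (quatCoords α 1); quatCoords α 1, star (quatCoords α 0)]

lemma quatCoords_mul_toH (x : H) (c : ℂ) (b : Fin 2) :
    quatCoords (x * toH c) b = quatCoords x b * c := by
  fin_cases b <;> apply Complex.ext <;>
    simp only [Fin.zero_eta, Fin.mk_one, quatCoords_zero, quatCoords_one, Quaternion.re_mul,
      Quaternion.imI_mul, Quaternion.imJ_mul, Quaternion.imK_mul] <;> simp [toH, add_comm]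

open Matrix in
lemma quatCoords_mul (α x : H) : quatCoords (α * x) = quatMatrix α *ᵥ quatCoords x := by
  ext a
  fin_cases a <;> apply Complex.ext <;>
    simp only [Fin.zero_eta, Fin.mk_one, quatCoords_zero, quatCoords_one, Quaternion.re_mul,
      Quaternion.imI_mul, Quaternion.imJ_mul, Quaternion.imK_mul] <;>
    simp [quatMatrix, Matrix.mulVec, dotProduct, Fin.sum_univ_two] <;> ring

def vecCoords {Q : Type*} : (Q → H) ≃ₗ[ℝ] (Q × Fin 2 → ℂ) :=
  (LinearEquiv.piCongrRight fun _ => quatCoords).trans (LinearEquiv.curry ℝ ℂ Q (Fin 2)).symm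

@[simp] lemma vecCoords_apply {Q : Type*} (f : Q → H) (p : Q × Fin 2) :
    vecCoords f p = quatCoords (f p.1) p.2 := rfl

section TwistedOperator

variable {ι Q : Type*} [Fintype ι]

def twistedOp (A : ι → Q → H) (τ : ι → Q → Q) (c : ι → Q → ℂ) (f : Q → H) : Q → H :=
  fun q => ∑ i, A i q * (f (τ i q) * toH (c i q))

variable {A : ι → Q → H} {τ : ι → Q → Q}

lemma twistedOp_mul_toH {c c' : ι → Q → ℂ} {w u : Q → ℂ}
    (hc : ∀ i q, w (τ i q) * c' i q = c i q * u q) (f : Q → H) :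
    twistedOp A τ c' (fun q => f q * toH (w q)) = fun q => twistedOp A τ c f q * toH (u q) := by
  funext q
  simp only [twistedOp, Finset.sum_mul, mul_assoc, ← toH_mul, hc]

lemma exists_twistedOp_eq_zero_congr {c c' : ι → Q → ℂ} {w u : Q → ℂ}
    (hw : ∀ q, w q ≠ 0) (hu : ∀ q, u q ≠ 0) (hc : ∀ i q, w (τ i q) * c' i q = c i q * u q) :
    (∃ f, f ≠ 0 ∧ twistedOp A τ c' f = 0) ↔ ∃ f, f ≠ 0 ∧ twistedOp A τ c f = 0 := by
  have hmul_eq_zero {g : Q → H} (v : Q → ℂ) (hv : ∀ q, v q ≠ 0) :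
      (fun q => g q * toH (v q)) = 0 ↔ g = 0 := by
    simp only [funext_iff, Pi.zero_apply, mul_eq_zero, toH_ne_zero (hv _), or_false]
  constructor
  · rintro ⟨g, hg, hop⟩
    have hg' : (fun q => (g q * toH (w q)⁻¹) * toH (w q)) = g := by
      funext q
      rw [mul_assoc, ← toH_mul, inv_mul_cancel₀ (hw q), toH_one, mul_one]
    refine ⟨fun q => g q * toH (w q)⁻¹, fun h0 => hg ?_, ?_⟩
    · rwa [hmul_eq_zero _ fun q => inv_ne_zero (hw q)] at h0
    · rw [← hmul_eq_zero u hu, ← twistedOp_mul_toH hc, hg', hop]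
  · rintro ⟨f, hf, hop⟩
    refine ⟨fun q => f q * toH (w q), (hmul_eq_zero w hw).not.mpr hf, ?_⟩
    rw [twistedOp_mul_toH hc, hmul_eq_zero u hu, hop]

lemma eq_zero_of_twistedOp_single {c : ι → Q → ℂ} {j : ι} (hA : ∀ q, A j q ≠ 0)
    (hτ : Function.Surjective (τ j)) (hcj : ∀ q, c j q = 1) (hc : ∀ i ≠ j, ∀ q, c i q = 0)
    {f : Q → H} (hf : twistedOp A τ c f = 0) : f = 0 := by
  funext q
  obtain ⟨q', rfl⟩ := hτ q
  have h := congrFun hf q'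
  rw [twistedOp, Finset.sum_eq_single j (fun i _ hi => by simp [hc i hi, toH_zero]) (by simp)] at h
  simpa [hcj, toH_one, hA] using h

end TwistedOperator

section TwistedMatrix

open Matrix

variable {ι Q : Type*} [Fintype ι] [DecidableEq Q] {A : ι → Q → H} {τ : ι → Q → Q}

/-- Over a general commutative `ℂ`-algebra `R`, so that the coefficients may be polynomials. -/
def twistedMatrix (R : Type*) [CommRing R] [Algebra ℂ R] (A : ι → Q → H) (τ : ι → Q → Q)
    (c : ι → Q → R) : Matrix (Q × Fin 2) (Q × Fin 2) R :=
  Matrix.of fun p p' => ∑ i, if p'.1 = τ i p.1 then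
    c i p.1 * algebraMap ℂ R (quatMatrix (A i p.1) p.2 p'.2) else 0

variable {R S : Type*} [CommRing R] [Algebra ℂ R] [CommRing S] [Algebra ℂ S]

lemma twistedMatrix_smul (r : R) (c : ι → Q → R) :
    r • twistedMatrix R A τ c = twistedMatrix R A τ (fun i q => r * c i q) := by
  ext p p'
  simp [twistedMatrix, Finset.mul_sum, mul_assoc]

variable [Fintype Q]

lemma map_det_twistedMatrix (φ : R →ₐ[ℂ] S) (c : ι → Q → R) :
    φ (twistedMatrix R A τ c).det = (twistedMatrix S A τ (fun i q => φ (c i q))).det := by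
  rw [AlgHom.map_det]
  congr 1
  ext p p'
  simp [twistedMatrix, apply_ite φ]

lemma twistedMatrix_mulVec (c : ι → Q → ℂ) (f : Q → H) :
    twistedMatrix ℂ A τ c *ᵥ vecCoords f = vecCoords (twistedOp A τ c f) := by
  ext ⟨q, a⟩
  simp only [twistedOp, vecCoords_apply, ← mul_assoc, map_sum, Finset.sum_apply,
    quatCoords_mul_toH]
  simp only [quatCoords_mul, mulVec, dotProduct, Fintype.sum_prod_type, twistedMatrix, of_apply,
    vecCoords_apply, Finset.sum_mul, Algebra.algebraMap_self, RingHom.id_apply, ite_mul, zero_mul]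
  simp only [Finset.sum_comm (s := (Finset.univ : Finset Q)), Finset.sum_ite_eq',
    Finset.mem_univ, if_true]
  rw [Finset.sum_comm]
  exact Finset.sum_congr rfl fun _ _ => Finset.sum_congr rfl fun _ _ => by ring

theorem exists_twistedOp_eq_zero_iff_det (c : ι → Q → ℂ) :
    (∃ f, f ≠ 0 ∧ twistedOp A τ c f = 0) ↔ (twistedMatrix ℂ A τ c).det = 0 := by
  rw [← exists_mulVec_eq_zero_iff, vecCoords.surjective.exists]
  simp only [twistedMatrix_mulVec, ne_eq, LinearEquiv.map_eq_zero_iff]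

end TwistedMatrix

open Polynomial in
/-- A root-free polynomial over an algebraically closed field is constant, so a nonzero
reciprocal `R(t) = t ^ N P(1/t)` of it would vanish at `0`. -/
theorem exists_ne_zero_isRoot_of_reciprocal {K : Type*} [Field K] [IsAlgClosed K]
    {P R : K[X]} {N : ℕ} (hN : N ≠ 0) (hP : P.eval 0 ≠ 0) (hR : R.eval 0 ≠ 0)
    (hPR : ∀ t ≠ 0, R.eval t = t ^ N * P.eval t⁻¹) : ∃ t ≠ 0, P.IsRoot t := by
  by_contra! hroot
  have hdeg : P.degree = 0 := by
    by_contra hdeg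
    obtain ⟨t, ht⟩ := IsAlgClosed.exists_root P hdeg
    rcases eq_or_ne t 0 with rfl | ht0
    exacts [hP ht, hroot t ht0 ht]
  set c := P.coeff 0
  have hPc : P = C c := eq_C_of_degree_eq_zero hdeg
  have hRX : R = C c * X ^ N := by
    refine eq_of_infinite_eval_eq _ _ ((Set.finite_singleton 0).infinite_compl.mono ?_)
    intro t ht
    change R.eval t = _
    rw [hPR t ht, hPc, eval_mul, eval_C, eval_C, eval_pow, eval_X, mul_comm]
  exact hR (by simp [hRX, hN])

section TwistedPencil

open Polynomial

variable {ι Q : Type*} [Fintype ι] [Fintype Q] [DecidableEq Q] {A : ι → Q → H} {τ : ι → Q → Q}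

lemma det_twistedMatrix_zero_pow_ne_zero {n : ι → ℕ} {j : ι} (hn : ∀ i, n i = 0 ↔ i = j)
    (hA : ∀ q, A j q ≠ 0) (hτ : Function.Surjective (τ j)) :
    (twistedMatrix ℂ A τ (fun i _ => (0 : ℂ) ^ n i)).det ≠ 0 := by
  rw [Ne, ← exists_twistedOp_eq_zero_iff_det]
  rintro ⟨f, hf, hop⟩
  exact hf (eq_zero_of_twistedOp_single hA hτ (by simp [(hn j).2 rfl])
    (fun i hi _ => zero_pow ((hn i).not.2 hi)) hop)

lemma eval_det_twistedMatrix_X_pow (n : ι → ℕ) (t : ℂ) :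
    (twistedMatrix ℂ[X] A τ (fun i _ => X ^ n i)).det.eval t =
      (twistedMatrix ℂ A τ (fun i _ => t ^ n i)).det := by
  rw [← coe_aeval_eq_eval, map_det_twistedMatrix]
  simp

lemma det_twistedMatrix_pow_sub {n : ι → ℕ} {d : ℕ} (hn : ∀ i, n i ≤ d) {t : ℂ} (ht : t ≠ 0) :
    (twistedMatrix ℂ A τ (fun i _ => t ^ (d - n i))).det =
      t ^ (d * Fintype.card (Q × Fin 2)) * (twistedMatrix ℂ A τ (fun i _ => t⁻¹ ^ n i)).det := by
  rw [pow_mul, ← Matrix.det_smul, twistedMatrix_smul]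
  simp_rw [pow_sub₀ t ht (hn _), inv_pow]

theorem exists_det_twistedMatrix_pow_eq_zero [Nonempty Q] {n : ι → ℕ} {d : ℕ} {i₀ i₁ : ι}
    (hd : d ≠ 0) (hn : ∀ i, n i ≤ d) (hn₀ : ∀ i, n i = 0 ↔ i = i₀) (hn₁ : ∀ i, n i = d ↔ i = i₁)
    (hA₀ : ∀ q, A i₀ q ≠ 0) (hτ₀ : Function.Surjective (τ i₀))
    (hA₁ : ∀ q, A i₁ q ≠ 0) (hτ₁ : Function.Surjective (τ i₁)) :
    ∃ t : ℂˣ, (twistedMatrix ℂ A τ (fun i _ => (t : ℂ) ^ n i)).det = 0 := by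
  have hn₁' : ∀ i, d - n i = 0 ↔ i = i₁ := fun i => by rw [← hn₁ i]; have := hn i; omega
  obtain ⟨t, ht, hroot⟩ := exists_ne_zero_isRoot_of_reciprocal
    (P := (twistedMatrix ℂ[X] A τ (fun i _ => X ^ n i)).det)
    (R := (twistedMatrix ℂ[X] A τ (fun i _ => X ^ (d - n i))).det)
    (mul_ne_zero hd (Fintype.card_ne_zero (α := Q × Fin 2)))
    (by rw [eval_det_twistedMatrix_X_pow]; exact det_twistedMatrix_zero_pow_ne_zero hn₀ hA₀ hτ₀)
    (by rw [eval_det_twistedMatrix_X_pow]; exact det_twistedMatrix_zero_pow_ne_zero hn₁' hA₁ hτ₁)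
    (fun t ht => by simp only [eval_det_twistedMatrix_X_pow, det_twistedMatrix_pow_sub hn ht])
  exact ⟨Units.mk0 t ht, by simpa [eval_det_twistedMatrix_X_pow] using hroot⟩

theorem exists_det_twistedMatrix_pow_ne_zero {n : ι → ℕ} {i₀ : ι} (hn₀ : ∀ i, n i = 0 ↔ i = i₀)
    (hA₀ : ∀ q, A i₀ q ≠ 0) (hτ₀ : Function.Surjective (τ i₀)) :
    ∃ t : ℂˣ, (twistedMatrix ℂ A τ (fun i _ => (t : ℂ) ^ n i)).det ≠ 0 := by
  by_contra! h
  apply det_twistedMatrix_zero_pow_ne_zero hn₀ hA₀ hτ₀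
  rw [← eval_det_twistedMatrix_X_pow, eq_zero_of_infinite_isRoot
    (twistedMatrix ℂ[X] A τ (fun i _ => X ^ n i)).det
    ((Set.finite_singleton 0).infinite_compl.mono fun t ht => ?_), eval_zero]
  change eval t _ = 0
  rw [eval_det_twistedMatrix_X_pow]
  exact h (Units.mk0 t ht)

end TwistedPencil

section Quotient

open QuotientAddGroup

variable {G : Type*} [AddCommGroup G] (Γ : AddSubgroup G)

def repOffset (x : G) : Γ :=
  ⟨x - (x : G ⧸ Γ).out, by
    simpa [neg_add_eq_sub] using QuotientAddGroup.eq.mp (out_eq' (x : G ⧸ Γ))⟩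

lemma out_add_repOffset (x : G) : (x : G ⧸ Γ).out + repOffset Γ x = x := by
  simp [repOffset]

lemma repOffset_add (x : G) (g : Γ) : repOffset Γ (x + g) = repOffset Γ x + g := by
  ext
  simp [repOffset, mk_add_of_mem x g.2]
  abel

@[simp] lemma repOffset_out (q : G ⧸ Γ) : repOffset Γ q.out = 0 := by
  ext
  simp [repOffset]

variable {ι : Type*}

def repCoeff (α : ι → G → H) (i : ι) (q : G ⧸ Γ) : H := α i q.out

def repShift (e : ι → G) (i : ι) (q : G ⧸ Γ) : G ⧸ Γ := (q.out + e i : G)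

def repMonodromy (e : ι → G) (h : Γ → ℂˣ) (i : ι) (q : G ⧸ Γ) : ℂ :=
  h (repOffset Γ (q.out + e i))

lemma repShift_surjective (e : ι → G) (i : ι) : Function.Surjective (repShift Γ e i) :=
  fun q => ⟨q - (e i : G ⧸ Γ), by simp [repShift]⟩

def extendMonodromy (h : Γ → ℂˣ) (f : G ⧸ Γ → H) (x : G) : H :=
  f x * toH (h (repOffset Γ x))

def IsStencilSection [Fintype ι] (α : ι → G → H) (e : ι → G) (h : Γ → ℂˣ) (ψ : G → H) : Prop :=
  (∀ v, ∑ i, α i v * ψ (v + e i) = 0) ∧ ∀ x (g : Γ), ψ (x + g) = ψ x * toH (h g)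

variable {Γ} {h : Γ → ℂˣ}

lemma eq_extendMonodromy {ψ : G → H} (hψ : ∀ x (g : Γ), ψ (x + g) = ψ x * toH (h g)) :
    ψ = extendMonodromy Γ h (fun q => ψ q.out) := by
  funext x
  conv_lhs => rw [← out_add_repOffset Γ x]
  exact hψ _ _

lemma extendMonodromy_add (hadd : ∀ a b : Γ, h (a + b) = h a * h b) (f : G ⧸ Γ → H) (x : G)
    (g : Γ) :
    extendMonodromy Γ h f (x + g) = extendMonodromy Γ h f x * toH (h g) := by
  simp only [extendMonodromy, mk_add_of_mem x g.2, repOffset_add, hadd, Units.val_mul, toH_mul,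
    mul_assoc]

lemma extendMonodromy_out (hadd : ∀ a b : Γ, h (a + b) = h a * h b) (f : G ⧸ Γ → H)
    (q : G ⧸ Γ) :
    extendMonodromy Γ h f q.out = f q := by
  have h0 : h 0 = 1 := by simpa using hadd 0 0
  simp [extendMonodromy, h0, toH_one]

variable [Fintype ι] {α : ι → G → H} {e : ι → G}

lemma stencil_eq_stencil_out_mul (hper : ∀ i x (g : Γ), α i (x + g) = α i x) {ψ : G → H}
    (hψ : ∀ x (g : Γ), ψ (x + g) = ψ x * toH (h g)) (v : G) :
    ∑ i, α i v * ψ (v + e i) = (∑ i, α i (v : G ⧸ Γ).out * ψ ((v : G ⧸ Γ).out + e i)) *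
      toH (h (repOffset Γ v)) := by
  conv_lhs => rw [← out_add_repOffset Γ v]
  simp only [Finset.sum_mul, mul_assoc, add_right_comm _ (repOffset Γ v : G), hper, hψ]

lemma twistedOp_out {ψ : G → H} (hψ : ∀ x (g : Γ), ψ (x + g) = ψ x * toH (h g)) (q : G ⧸ Γ) :
    twistedOp (repCoeff Γ α) (repShift Γ e) (repMonodromy Γ e h) (fun q => ψ q.out) q =
      ∑ i, α i q.out * ψ (q.out + e i) := by
  simp only [twistedOp, repCoeff, repShift, repMonodromy]
  exact Finset.sum_congr rfl fun i _ => by rw [congrFun (eq_extendMonodromy hψ) (q.out + e i)]; rfl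

lemma stencil_eq_zero_iff_twistedOp (hper : ∀ i x (g : Γ), α i (x + g) = α i x) {ψ : G → H}
    (hψ : ∀ x (g : Γ), ψ (x + g) = ψ x * toH (h g)) :
    (∀ v, ∑ i, α i v * ψ (v + e i) = 0) ↔
      twistedOp (repCoeff Γ α) (repShift Γ e) (repMonodromy Γ e h) (fun q => ψ q.out) = 0 := by
  refine ⟨fun hv => funext fun q => by rw [twistedOp_out hψ, hv, Pi.zero_apply], fun hop v => ?_⟩
  rw [stencil_eq_stencil_out_mul hper hψ, ← twistedOp_out hψ, hop, Pi.zero_apply, zero_mul]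

end Quotient

section Reduction

open QuotientAddGroup

variable {G : Type*} [AddCommGroup G] {Γ : AddSubgroup G} {ι : Type*} [Fintype ι]
  {α : ι → G → H} {e : ι → G}

theorem exists_isStencilSection_iff (hper : ∀ i x (g : Γ), α i (x + g) = α i x)
    {h : Γ → ℂˣ} (hadd : ∀ a b : Γ, h (a + b) = h a * h b) :
    (∃ ψ, ψ ≠ 0 ∧ IsStencilSection Γ α e h ψ) ↔
      ∃ f, f ≠ 0 ∧ twistedOp (repCoeff Γ α) (repShift Γ e) (repMonodromy Γ e h) f = 0 := by
  constructor
  · rintro ⟨ψ, hne, heq, hψ⟩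
    refine ⟨fun q => ψ q.out, fun h0 => hne ?_, (stencil_eq_zero_iff_twistedOp hper hψ).1 heq⟩
    rw [eq_extendMonodromy hψ, h0]
    funext x
    simp [extendMonodromy]
  · rintro ⟨f, hne, hop⟩
    have hψ := extendMonodromy_add hadd f
    have hres : (fun q => extendMonodromy Γ h f q.out) = f := funext (extendMonodromy_out hadd f)
    refine ⟨extendMonodromy Γ h f, fun h0 => hne ?_, ?_, hψ⟩
    · rw [← hres, h0]
      rfl
    · rw [stencil_eq_zero_iff_twistedOp hper hψ, hres]
      exact hop

/-- The gauge transformation `f q ↦ f q · χ(q̄)`, `q̄` the representative of `q`. -/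
theorem exists_isStencilSection_iff_of_character (hper : ∀ i x (g : Γ), α i (x + g) = α i x)
    {χ : G → ℂˣ} (hχ : ∀ a b, χ (a + b) = χ a * χ b) :
    (∃ ψ, ψ ≠ 0 ∧ IsStencilSection Γ α e (fun g => χ g) ψ) ↔
      ∃ f, f ≠ 0 ∧ twistedOp (repCoeff Γ α) (repShift Γ e) (fun i _ => χ (e i)) f = 0 := by
  rw [exists_isStencilSection_iff hper fun a b => by rw [AddSubgroup.coe_add, hχ]]
  refine exists_twistedOp_eq_zero_congr (w := fun q => χ q.out) (u := fun q => χ q.out)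
    (fun _ => Units.ne_zero _) (fun _ => Units.ne_zero _) fun i q => ?_
  simp only [repShift, repMonodromy]
  rw [← Units.val_mul, ← hχ, out_add_repOffset, ← Units.val_mul, ← hχ, add_comm]

end Reduction

section SpectralPolynomial

open MvPolynomial

lemma eq_zpow_mul_zpow_of_map_add {Γ : Type*} [AddGroup Γ] {h : Γ → ℂˣ}
    (hadd : ∀ a b, h (a + b) = h a * h b) {γ η g : Γ} {a b : ℤ} (hg : g = a • γ + b • η) :
    h g = h γ ^ a * h η ^ b := by
  let φ : Γ →+ Additive ℂˣ := AddMonoidHom.mk' (fun g => Additive.ofMul (h g)) hadd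
  have := congrArg φ hg
  rw [map_add, map_zsmul, map_zsmul] at this
  exact this

/-- `X^a Y^b` multiplied by `(XY)^s`, a polynomial as soon as `|a|, |b| ≤ s`. -/
def laurentMonomial (s : ℕ) (ab : ℤ × ℤ) : MvPolynomial (Fin 2) ℂ :=
  X 0 ^ (s + ab.1).toNat * X 1 ^ (s + ab.2).toNat

lemma eval_laurentMonomial {z w : ℂ} (hz : z ≠ 0) (hw : w ≠ 0) {s : ℕ} {ab : ℤ × ℤ}
    (ha : ab.1.natAbs ≤ s) (hb : ab.2.natAbs ≤ s) :
    eval ![z, w] (laurentMonomial s ab) = z ^ ab.1 * w ^ ab.2 * (z * w) ^ s := by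
  have key {u : ℂ} (hu : u ≠ 0) {m : ℤ} (hm : m.natAbs ≤ s) :
      u ^ (s + m).toNat = u ^ m * u ^ s := by
    rw [← zpow_natCast, Int.toNat_of_nonneg (by omega), zpow_add₀ hu, zpow_natCast, mul_comm]
  simp only [laurentMonomial, map_mul, map_pow, eval_X, Matrix.cons_val_zero,
    Matrix.cons_val_one, key hz ha, key hw hb]
  ring

variable {G : Type*} [AddCommGroup G] {Γ : AddSubgroup G} {γ η : Γ}
  (hspan : ∀ g : Γ, ∃ ab : ℤ × ℤ, g = ab.1 • γ + ab.2 • η)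
  {ι : Type*} [Fintype ι] (α : ι → G → H) (e : ι → G)

def basisCoords (g : Γ) : ℤ × ℤ := (hspan g).choose

def monodromyExponents (i : ι) (q : G ⧸ Γ) : ℤ × ℤ :=
  basisCoords hspan (repOffset Γ (q.out + e i))

def monodromyDegree (q : G ⧸ Γ) : ℕ :=
  ∑ i, ((monodromyExponents hspan e i q).1.natAbs + (monodromyExponents hspan e i q).2.natAbs)

/-- The determinant of the system on `G ⧸ Γ`, as a polynomial in `h(γ)` and `h(η)` after
clearing denominators row by row. -/
def spectralPolynomial [Fintype (G ⧸ Γ)] [DecidableEq (G ⧸ Γ)] : MvPolynomial (Fin 2) ℂ :=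
  (twistedMatrix _ (repCoeff Γ α) (repShift Γ e)
    fun i q => laurentMonomial (monodromyDegree hspan e q) (monodromyExponents hspan e i q)).det

variable {α e}

lemma eval_laurentMonomial_monodromyExponents {h : Γ → ℂˣ}
    (hadd : ∀ a b : Γ, h (a + b) = h a * h b) (i : ι) (q : G ⧸ Γ) :
    eval ![(h γ : ℂ), h η] (laurentMonomial (monodromyDegree hspan e q)
        (monodromyExponents hspan e i q)) =
      repMonodromy Γ e h i q * (h γ * h η : ℂ) ^ monodromyDegree hspan e q := by
  have hle : (monodromyExponents hspan e i q).1.natAbs + (monodromyExponents hspan e i q).2.natAbs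
      ≤ monodromyDegree hspan e q :=
    Finset.single_le_sum_of_canonicallyOrdered (Finset.mem_univ i)
      (f := fun j => (monodromyExponents hspan e j q).1.natAbs +
        (monodromyExponents hspan e j q).2.natAbs)
  rw [eval_laurentMonomial (Units.ne_zero _) (Units.ne_zero _) (by omega) (by omega),
    repMonodromy, eq_zpow_mul_zpow_of_map_add hadd (hspan (repOffset Γ (q.out + e i))).choose_spec]
  simp [monodromyExponents, basisCoords]

theorem exists_isStencilSection_iff_spectralPolynomial [Fintype (G ⧸ Γ)] [DecidableEq (G ⧸ Γ)]
    (hper : ∀ i x (g : Γ), α i (x + g) = α i x) {h : Γ → ℂˣ}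
    (hadd : ∀ a b : Γ, h (a + b) = h a * h b) :
    (∃ ψ, ψ ≠ 0 ∧ IsStencilSection Γ α e h ψ) ↔
      eval ![(h γ : ℂ), h η] (spectralPolynomial hspan α e) = 0 := by
  rw [exists_isStencilSection_iff hper hadd, spectralPolynomial, ← aeval_eq_eval,
    map_det_twistedMatrix, ← exists_twistedOp_eq_zero_iff_det]
  refine (exists_twistedOp_eq_zero_congr (w := 1)
    (u := fun q => (h γ * h η : ℂ) ^ monodromyDegree hspan e q) (fun _ => one_ne_zero)
    (fun _ => pow_ne_zero _ (mul_ne_zero (Units.ne_zero _) (Units.ne_zero _))) fun i q => ?_).symm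
  rw [Pi.one_apply, one_mul, aeval_eq_eval]
  exact eval_laurentMonomial_monodromyExponents hspan hadd i q

end SpectralPolynomial

section Torus

variable {Γ : AddSubgroup (ℤ × ℤ)} {α₁ α₂ α₃ : ℤ × ℤ → H}

lemma isHoloSection_iff_isStencilSection {h : Γ → ℂˣ} {ψ : ℤ × ℤ → H} :
    IsHoloSection Γ α₁ α₂ α₃ h ψ ↔ IsStencilSection Γ ![α₁, α₂, α₃] ![0, e₁, e₂] h ψ := by
  simp [IsHoloSection, IsStencilSection, Fin.sum_univ_three]

/-- A line of characters of `ℤ²` with weights `0, 2, 1` on `0, e₁, e₂`: along it the `α₁`-term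
of the system dominates as `t → 0` and the `α₂`-term as `t → ∞`. -/
def lineCharacter (t : ℂˣ) (x : ℤ × ℤ) : ℂˣ := t ^ (2 * x.1 + x.2)

lemma lineCharacter_add (t : ℂˣ) (x y : ℤ × ℤ) :
    lineCharacter t (x + y) = lineCharacter t x * lineCharacter t y := by
  rw [lineCharacter, lineCharacter, lineCharacter, ← zpow_add]
  congr 1
  simp only [Prod.fst_add, Prod.snd_add]
  ring

theorem exists_isHoloSection_lineCharacter_iff [Fintype ((ℤ × ℤ) ⧸ Γ)]
    [DecidableEq ((ℤ × ℤ) ⧸ Γ)] (hper : ∀ i x (g : Γ), ![α₁, α₂, α₃] i (x + g) = ![α₁, α₂, α₃] i x)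
    (t : ℂˣ) :
    (∃ ψ, ψ ≠ 0 ∧ IsHoloSection Γ α₁ α₂ α₃ (fun g => lineCharacter t g) ψ) ↔
      (twistedMatrix ℂ (repCoeff Γ ![α₁, α₂, α₃]) (repShift Γ ![0, e₁, e₂])
        (fun i _ => (t : ℂ) ^ ![0, 2, 1] i)).det = 0 := by
  simp only [isHoloSection_iff_isStencilSection]
  rw [exists_isStencilSection_iff_of_character hper (lineCharacter_add t),
    exists_twistedOp_eq_zero_iff_det]
  congr! 4 with i
  fin_cases i <;> simp [lineCharacter, e₁, e₂]

end Torus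

theorem spectrum_algebraic_nonempty_general
    (Γ : AddSubgroup (ℤ × ℤ)) (hΓ : Γ.index ≠ 0)
    (α₁ α₂ α₃ : ℤ × ℤ → H)
    (hα₁ : ∀ x, α₁ x ≠ 0) (hα₂ : ∀ x, α₂ x ≠ 0)
    (hper₁ : ∀ x : ℤ × ℤ, ∀ g : Γ, α₁ (x + (g : ℤ × ℤ)) = α₁ x)
    (hper₂ : ∀ x : ℤ × ℤ, ∀ g : Γ, α₂ (x + (g : ℤ × ℤ)) = α₂ x)
    (hper₃ : ∀ x : ℤ × ℤ, ∀ g : Γ, α₃ (x + (g : ℤ × ℤ)) = α₃ x)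
    (γ η : Γ)
    (hbasis : ∀ g : Γ, ∃! ab : ℤ × ℤ, g = ab.1 • γ + ab.2 • η) :
    (∃ p : MvPolynomial (Fin 2) ℂ, p ≠ 0 ∧
      ∀ h : Γ → ℂˣ, (∀ a b : Γ, h (a + b) = h a * h b) →
        ((∃ ψ : ℤ × ℤ → H, ψ ≠ 0 ∧ IsHoloSection Γ α₁ α₂ α₃ h ψ) ↔
          MvPolynomial.eval ![(h γ : ℂ), (h η : ℂ)] p = 0)) ∧
    (∃ h : Γ → ℂˣ, (∀ a b : Γ, h (a + b) = h a * h b) ∧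
      ∃ ψ : ℤ × ℤ → H, ψ ≠ 0 ∧ IsHoloSection Γ α₁ α₂ α₃ h ψ) := by
  classical
  have : Γ.FiniteIndex := ⟨hΓ⟩
  let _ := Fintype.ofFinite ((ℤ × ℤ) ⧸ Γ)
  have hper : ∀ i x (g : Γ), ![α₁, α₂, α₃] i (x + g) = ![α₁, α₂, α₃] i x := by
    intro i
    fin_cases i
    exacts [hper₁, hper₂, hper₃]
  have hspan (g : Γ) := (hbasis g).exists
  have hspec (h : Γ → ℂˣ) (hadd : ∀ a b : Γ, h (a + b) = h a * h b) :
      (∃ ψ, ψ ≠ 0 ∧ IsHoloSection Γ α₁ α₂ α₃ h ψ) ↔ MvPolynomial.eval ![(h γ : ℂ), (h η : ℂ)]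
        (spectralPolynomial hspan ![α₁, α₂, α₃] ![0, e₁, e₂]) = 0 := by
    simp only [isHoloSection_iff_isStencilSection]
    exact exists_isStencilSection_iff_spectralPolynomial hspan hper hadd
  set A := repCoeff Γ ![α₁, α₂, α₃]
  set τ := repShift Γ ![0, e₁, e₂]
  obtain ⟨t₀, ht₀⟩ := exists_det_twistedMatrix_pow_eq_zero (A := A) (τ := τ) (n := ![0, 2, 1])
    (i₀ := 0) (i₁ := 1) two_ne_zero (by decide) (by decide) (by decide)
    (fun _ => hα₁ _) (repShift_surjective Γ _ 0) (fun _ => hα₂ _) (repShift_surjective Γ _ 1)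
  obtain ⟨t₁, ht₁⟩ := exists_det_twistedMatrix_pow_ne_zero (A := A) (τ := τ) (n := ![0, 2, 1])
    (i₀ := 0) (by decide) (fun _ => hα₁ _) (repShift_surjective Γ _ 0)
  refine ⟨⟨_, fun hp => ht₁ ?_, hspec⟩, fun g => lineCharacter t₀ g,
    fun a b => lineCharacter_add t₀ a b, (exists_isHoloSection_lineCharacter_iff hper t₀).2 ht₀⟩
  rw [← exists_isHoloSection_lineCharacter_iff hper, hspec _ fun a b => lineCharacter_add t₁ a b,
    hp, map_zero]

/-- Lemma 4.13: the spectrum of a quaternionic holomorphic line bundle over a discrete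
torus with regular combinatorics is a nonempty algebraic subset of
`Hom(Γ, ℂˣ) ≅ ℂˣ × ℂˣ`, cut out by one polynomial. -/
theorem spectrum_algebraic_nonempty
    (Γ : AddSubgroup (ℤ × ℤ)) (hΓ : Γ.index ≠ 0)
    (α₁ α₂ α₃ : ℤ × ℤ → H)
    (hα₁ : ∀ x, α₁ x ≠ 0) (hα₂ : ∀ x, α₂ x ≠ 0) (hα₃ : ∀ x, α₃ x ≠ 0)
    (hper₁ : ∀ x : ℤ × ℤ, ∀ g : Γ, α₁ (x + (g : ℤ × ℤ)) = α₁ x)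
    (hper₂ : ∀ x : ℤ × ℤ, ∀ g : Γ, α₂ (x + (g : ℤ × ℤ)) = α₂ x)
    (hper₃ : ∀ x : ℤ × ℤ, ∀ g : Γ, α₃ (x + (g : ℤ × ℤ)) = α₃ x)
    (γ η : Γ)
    (hbasis : ∀ g : Γ, ∃! ab : ℤ × ℤ, g = ab.1 • γ + ab.2 • η) :
    (∃ p : MvPolynomial (Fin 2) ℂ, p ≠ 0 ∧
      ∀ h : Γ → ℂˣ, (∀ a b : Γ, h (a + b) = h a * h b) →
        ((∃ ψ : ℤ × ℤ → H, ψ ≠ 0 ∧ IsHoloSection Γ α₁ α₂ α₃ h ψ) ↔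
          MvPolynomial.eval ![(h γ : ℂ), (h η : ℂ)] p = 0)) ∧
    (∃ h : Γ → ℂˣ, (∀ a b : Γ, h (a + b) = h a * h b) ∧
      ∃ ψ : ℤ × ℤ → H, ψ ≠ 0 ∧ IsHoloSection Γ α₁ α₂ α₃ h ψ) :=
  spectrum_algebraic_nonempty_general Γ hΓ α₁ α₂ α₃ hα₁ hα₂ hper₁ hper₂ hper₃ γ η hbasis
end
end

section
/- Let L₀, …, L_{n−1} (indices mod n, n ≥ 3) be a closed polygon in ℍP¹, i.e. lines in ℍ² with Lᵢ ⊕ L_{i+1} = ℍ² and Lᵢ ∩ L_{i+2} = {0} for all i. Then the composition H(0) = P_{n−1} ∘ P_{n−2} ∘ ⋯ ∘ P₀ vanishes on L₁ and maps L_{n−1} isomorphically onto L_{n−1}. (This is the analysis of the lowest-order coefficient of the holonomy H(λ) in the proof of Theorem 6.1 on the points at infinity of the spectral curve of a closed polygon in S⁴.) -/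
noncomputable section

/-- The composition `P_{n-1} ∘ P_{n-2} ∘ ⋯ ∘ P₀`, the lowest-order coefficient `H(0)`
of the polynomial holonomy of a closed polygon. -/
lemma line_exists_ne_zero {L : Submodule Hᵐᵒᵖ H2} (h : IsLine L) : ∃ v ∈ L, v ≠ 0 := by
  obtain ⟨v, hv, rfl⟩ := h
  exact ⟨v, Submodule.mem_span_singleton_self v, hv⟩

lemma line_eq_of_le {M N : Submodule Hᵐᵒᵖ H2} (hM : IsLine M) (hNM : N ≤ M)
    (hN : N ≠ ⊥) : N = M := by
  obtain ⟨v, hv, rfl⟩ := hM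
  obtain ⟨w, hwN, hw0⟩ := Submodule.exists_mem_ne_zero_of_ne_bot hN
  obtain ⟨c, rfl⟩ := Submodule.mem_span_singleton.mp (hNM hwN)
  have hc : c ≠ 0 := by rintro rfl; simp at hw0
  have hvN : v ∈ N := by
    have : (c⁻¹ : Hᵐᵒᵖ) • c • v ∈ N := Submodule.smul_mem _ _ hwN
    rwa [smul_smul, inv_mul_cancel₀ hc, one_smul] at this
  exact le_antisymm hNM ((Submodule.span_singleton_le_iff_mem _ _).mpr hvN)

def H0 (n : ℕ) (P : ZMod n → (H2 →ₗ[Hᵐᵒᵖ] H2)) : H2 →ₗ[Hᵐᵒᵖ] H2 :=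
  (List.range n).foldl (fun A k => P (k : ZMod n) ∘ₗ A) LinearMap.id

/-- Analysis of the lowest-order coefficient `H(0)` of the holonomy in the proof of
Theorem 6.1: for a closed polygon `L₀, …, L_{n-1}` in `ℍP¹`, the composition
`H(0) = P_{n-1} ∘ ⋯ ∘ P₀` vanishes on `L₁` and maps `L_{n-1}` isomorphically onto
`L_{n-1}`. -/
theorem H0_vanishes_on_L1_and_bijOn_Lnm1
    (n : ℕ) (hn : 3 ≤ n) (L : ZMod n → Submodule Hᵐᵒᵖ H2)
    (hline : ∀ i, IsLine (L i))
    (hcompl : ∀ i, IsCompl (L i) (L (i + 1)))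
    (hpoly : ∀ i, L i ⊓ L (i + 2) = ⊥)
    (P Q : ZMod n → (H2 →ₗ[Hᵐᵒᵖ] H2))
    (hP : ∀ i v, P i v ∈ L i) (hQ : ∀ i v, Q i v ∈ L (i + 1))
    (hPQ : ∀ i v, P i v + Q i v = v) :
    (∀ v ∈ L 1, H0 n P v = 0) ∧
    Set.BijOn (H0 n P) (L ((n : ZMod n) - 1) : Set H2) (L ((n : ZMod n) - 1) : Set H2) := by
  -- partial compositions
  set Hk : ℕ → (H2 →ₗ[Hᵐᵒᵖ] H2) :=
    fun k => (List.range k).foldl (fun A j => P (j : ZMod n) ∘ₗ A) LinearMap.id with hHk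
  have hH0 : H0 n P = Hk n := rfl
  have hsucc : ∀ k, Hk (k + 1) = P (k : ZMod n) ∘ₗ Hk k := by
    intro k
    simp [hHk, List.range_succ]
  -- basic properties of the projections
  have hPform : ∀ i v, P i v = v - Q i v := by
    intro i v
    have := hPQ i v
    linear_combination (norm := abel) this
  have hPzero : ∀ i v, v ∈ L (i + 1) → P i v = 0 := by
    intro i v hv
    have h1 : P i v ∈ L (i + 1) := by
      rw [hPform]
      exact Submodule.sub_mem _ hv (hQ i v)
    have h2 : P i v ∈ L i ⊓ L (i + 1) := ⟨hP i v, h1⟩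
    rw [(hcompl i).inf_eq_bot] at h2
    simpa using h2
  have hker : ∀ i v, P i v = 0 → v ∈ L (i + 1) := by
    intro i v hv
    have := hPQ i v
    rw [hv, zero_add] at this
    rw [← this]; exact hQ i v
  -- P i maps L (i-1) bijectively onto L i
  have hstep : ∀ i : ZMod n, Set.BijOn (P i) (L (i - 1) : Set H2) (L i : Set H2) := by
    intro i
    have hdisj : L (i - 1) ⊓ L (i + 1) = ⊥ := by
      have := hpoly (i - 1)
      rwa [show i - 1 + 2 = i + 1 by ring] at this
    have hinj : Set.InjOn (P i) (L (i - 1) : Set H2) := by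
      intro v hv w hw hvw
      have h1 : P i (v - w) = 0 := by rw [map_sub, hvw, sub_self]
      have h2 : v - w ∈ L (i - 1) ⊓ L (i + 1) :=
        ⟨Submodule.sub_mem _ hv hw, hker i _ h1⟩
      rw [hdisj] at h2
      simpa [sub_eq_zero] using h2
    have hmaps : Set.MapsTo (P i) (L (i - 1) : Set H2) (L i : Set H2) :=
      fun v _ => hP i v
    refine ⟨hmaps, hinj, ?_⟩
    -- surjectivity via the image being a nonzero submodule of a line
    have himg : Submodule.map (P i) (L (i - 1)) = L i := by
      refine line_eq_of_le (hline i) ?_ ?_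
      · rintro x ⟨v, _, rfl⟩; exact hP i v
      · obtain ⟨v, hv, hv0⟩ := line_exists_ne_zero (hline (i - 1))
        intro hbot
        have : P i v = 0 := by
          have : P i v ∈ Submodule.map (P i) (L (i - 1)) := ⟨v, hv, rfl⟩
          rw [hbot] at this; simpa using this
        have h2 : v ∈ L (i - 1) ⊓ L (i + 1) := ⟨hv, hker i _ this⟩
        rw [hdisj] at h2
        exact hv0 (by simpa using h2)
    intro w hw
    rw [← himg] at hw
    obtain ⟨v, hv, rfl⟩ := hw
    exact ⟨v, hv, rfl⟩
  -- vanishing on L 1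
  have hvan : ∀ k, 1 ≤ k → ∀ v ∈ L 1, Hk k v = 0 := by
    intro k hk
    induction k with
    | zero => omega
    | succ m ih =>
      intro v hv
      rcases Nat.eq_or_lt_of_le hk with h | h
      · have hm : m = 0 := by omega
        subst hm
        rw [hsucc, LinearMap.comp_apply]
        have : Hk 0 v = v := rfl
        rw [this, Nat.cast_zero]
        exact hPzero 0 v (by simpa using hv)
      · rw [hsucc, LinearMap.comp_apply, ih (by omega) v hv, map_zero]
  -- bijectivity of partial compositions
  have hbij : ∀ k, 1 ≤ k → k ≤ n →
      Set.BijOn (Hk k) (L ((n : ZMod n) - 1) : Set H2) (L ((k : ZMod n) - 1) : Set H2) := by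
    intro k hk hkn
    induction k with
    | zero => omega
    | succ m ih =>
      rcases Nat.eq_or_lt_of_le hk with h | h
      · have hm : m = 0 := by omega
        subst hm
        have e : ∀ v, Hk 1 v = P 0 v := by intro v; rw [hsucc 0]; simp [hHk]
        have := (hstep 0).congr (fun v _ => (e v).symm)
        simpa [ZMod.natCast_self] using this
      · have bm := ih (by omega) (by omega)
        have comp := (hstep (m : ZMod n)).comp bm
        have e : ∀ v, (P (m : ZMod n) ∘ Hk m) v = Hk (m + 1) v := by
          intro v; rw [hsucc]; rfl
        have hfin := comp.congr (fun v _ => e v)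
        have ecast : (((m + 1 : ℕ)) : ZMod n) - 1 = (m : ZMod n) := by
          push_cast; ring
        rwa [ecast]
  constructor
  · intro v hv
    rw [hH0]
    exact hvan n (by omega) v hv
  · rw [hH0]
    exact hbij n (by omega) le_rfl
end
end

section
/- Let Γ be a subgroup of ℤ², let e₁ = (1,0), e₂ = (0,1), let α₁, α₂, α₃ : ℤ² → ℍ∖{0} be Γ-periodic functions, and let h : Γ → ℂˣ be a group homomorphism. If ψ : ℤ² → ℍ is a holomorphic section with monodromy h, then the function x ↦ ψ(x)·j is a holomorphic section with monodromy h̄, where h̄(g) is the complex conjugate of h(g). In particular, the spectrum — the set of homomorphisms h : Γ → ℂˣ admitting a nonzero holomorphic section with monodromy h — is invariant under the involution h ↦ h̄. (This is the symmetry ρ(h) = h̄ of the spectrum of a quaternionic holomorphic line bundle over a discrete torus, stated in Section 4.1 and in Lemma 4.17.) -/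
noncomputable section

/-- The quaternion `j`. -/
def jH : H := ⟨0, 0, 1, 0⟩

/-- The conjugated monodromy `h̄`. -/
def conjMonodromy {Γ : AddSubgroup (ℤ × ℤ)} (h : Γ → ℂˣ) : Γ → ℂˣ :=
  fun g => Units.map (starRingEnd ℂ).toMonoidHom (h g)

/-! The holomorphicity equation is left `ℍ`-linear, so it survives right multiplication by `j`,
while `z j = j z̄` for `z ∈ ℂ` turns the monodromy `h` into `h̄`. -/

lemma toH_mul_jH (z : ℂ) : toH z * jH = jH * toH (starRingEnd ℂ z) := by
  ext <;>
    simp only [Quaternion.re_mul, Quaternion.imI_mul, Quaternion.imJ_mul, Quaternion.imK_mul] <;>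
    simp [toH, jH]

lemma jH_ne_zero : jH ≠ 0 := fun h => one_ne_zero (congrArg QuaternionAlgebra.imJ h)

lemma mul_jH_ne_zero {X : Type*} {ψ : X → H} (hψ : ψ ≠ 0) : (fun x => ψ x * jH) ≠ 0 :=
  fun h0 => hψ <| funext fun x => (mul_eq_zero.mp (congrFun h0 x)).resolve_right jH_ne_zero

theorem IsHoloSection.mul_jH {Γ : AddSubgroup (ℤ × ℤ)} {α₁ α₂ α₃ : ℤ × ℤ → H} {h : Γ → ℂˣ}
    {ψ : ℤ × ℤ → H} (hψ : IsHoloSection Γ α₁ α₂ α₃ h ψ) :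
    IsHoloSection Γ α₁ α₂ α₃ (conjMonodromy h) (fun x => ψ x * jH) := by
  obtain ⟨hholo, hmono⟩ := hψ
  refine ⟨fun v => ?_, fun x g => ?_⟩
  · simp only [← mul_assoc, ← add_mul, hholo v, zero_mul]
  · change ψ (x + g) * jH = ψ x * jH * toH (starRingEnd ℂ (h g))
    rw [hmono x g, mul_assoc, mul_assoc, toH_mul_jH]

theorem spectrum_conjugation_symmetry_general
    (Γ : AddSubgroup (ℤ × ℤ))
    (α₁ α₂ α₃ : ℤ × ℤ → H)
    (h : Γ → ℂˣ) :
    (∀ ψ : ℤ × ℤ → H, IsHoloSection Γ α₁ α₂ α₃ h ψ →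
      IsHoloSection Γ α₁ α₂ α₃ (conjMonodromy h) (fun x => ψ x * jH)) ∧
    ((∃ ψ : ℤ × ℤ → H, ψ ≠ 0 ∧ IsHoloSection Γ α₁ α₂ α₃ h ψ) →
      (∃ ψ : ℤ × ℤ → H, ψ ≠ 0 ∧ IsHoloSection Γ α₁ α₂ α₃ (conjMonodromy h) ψ)) :=
  ⟨fun _ hψ => hψ.mul_jH, fun ⟨_, hψ0, hψ⟩ => ⟨_, mul_jH_ne_zero hψ0, hψ.mul_jH⟩⟩

/-- The symmetry `ρ(h) = h̄` of the spectrum (Section 4.1, Lemma 4.17): if `ψ` is a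
holomorphic section with monodromy `h`, then `ψ·j` is a holomorphic section with
monodromy `h̄`; in particular the spectrum is invariant under `h ↦ h̄`. -/
theorem spectrum_conjugation_symmetry
    (Γ : AddSubgroup (ℤ × ℤ))
    (α₁ α₂ α₃ : ℤ × ℤ → H)
    (hα₁ : ∀ x, α₁ x ≠ 0) (hα₂ : ∀ x, α₂ x ≠ 0) (hα₃ : ∀ x, α₃ x ≠ 0)
    (hper₁ : ∀ x : ℤ × ℤ, ∀ g : Γ, α₁ (x + (g : ℤ × ℤ)) = α₁ x)
    (hper₂ : ∀ x : ℤ × ℤ, ∀ g : Γ, α₂ (x + (g : ℤ × ℤ)) = α₂ x)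
    (hper₃ : ∀ x : ℤ × ℤ, ∀ g : Γ, α₃ (x + (g : ℤ × ℤ)) = α₃ x)
    (h : Γ → ℂˣ) (hhom : ∀ a b : Γ, h (a + b) = h a * h b) :
    (∀ ψ : ℤ × ℤ → H, IsHoloSection Γ α₁ α₂ α₃ h ψ →
      IsHoloSection Γ α₁ α₂ α₃ (conjMonodromy h) (fun x => ψ x * jH)) ∧
    ((∃ ψ : ℤ × ℤ → H, ψ ≠ 0 ∧ IsHoloSection Γ α₁ α₂ α₃ h ψ) →
      (∃ ψ : ℤ × ℤ → H, ψ ≠ 0 ∧ IsHoloSection Γ α₁ α₂ α₃ (conjMonodromy h) ψ)) :=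
  spectrum_conjugation_symmetry_general Γ α₁ α₂ α₃ h
end
end

section
/- Let Γ be a subgroup of ℤ², let e₁ = (1,0), e₂ = (0,1), let α₁, α₂, α₃ : ℤ² → ℍ∖{0} be Γ-periodic functions, and let h : Γ → ℂˣ be a group homomorphism all of whose values are real (h = h̄). If there exists a nonzero holomorphic section ψ with monodromy h, then the complex vector space of all holomorphic sections with monodromy h (with ℂ acting by pointwise right multiplication) has dimension at least 2; indeed ψ and ψ·j are linearly independent over ℂ. (This underlies the statement in Lemma 4.17 that the anti-holomorphic involution ρ of the spectral curve, which covers h ↦ h̄, has no fixed points: at a point fixed by ρ the space of holomorphic sections with the corresponding monodromy cannot be complex one-dimensional.) -/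
noncomputable section

/-! The holomorphicity equations are left-linear, so right multiplication by `j` preserves
them, and `j` commutes with real monodromy factors; hence `ψ j` is again a section with
monodromy `h`. Since `ℍ` has no zero divisors, `ψ a + ψ j b = ψ (a + j b)` vanishes only if
`a + j b = 0`, i.e. `a = b = 0`. -/

theorem commute_jH_toH_of_conj_eq {z : ℂ} (hz : starRingEnd ℂ z = z) : Commute jH (toH z) := by
  have him : z.im = 0 := Complex.conj_eq_iff_im.mp hz
  ext <;> simp only [Quaternion.re_mul, Quaternion.imI_mul, Quaternion.imJ_mul,
    Quaternion.imK_mul] <;> simp [jH, toH, him]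

theorem IsHoloSection.mul_right {Γ : AddSubgroup (ℤ × ℤ)} {α₁ α₂ α₃ : ℤ × ℤ → H}
    {h : Γ → ℂˣ} {ψ : ℤ × ℤ → H} (hψ : IsHoloSection Γ α₁ α₂ α₃ h ψ) (q : H)
    (hq : ∀ g : Γ, Commute q (toH (h g))) :
    IsHoloSection Γ α₁ α₂ α₃ h (fun x => ψ x * q) := by
  obtain ⟨heq, hmon⟩ := hψ
  refine ⟨fun v => ?_, fun x g => ?_⟩
  · simp only [← mul_assoc, ← add_mul, heq v, zero_mul]
  · show ψ (x + g) * q = ψ x * q * toH (h g)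
    rw [hmon x g, mul_assoc, ← (hq g).eq, ← mul_assoc]

-- `ℍ = ℂ ⊕ jℂ`: the coordinates of `toH a + jH * toH b` are `(a.re, a.im, b.re, -b.im)`.
theorem toH_add_jH_mul_toH_eq_zero_iff {a b : ℂ} :
    toH a + jH * toH b = 0 ↔ a = 0 ∧ b = 0 := by
  rw [Quaternion.ext_iff]
  simp only [Quaternion.re_add, Quaternion.imI_add, Quaternion.imJ_add,
    Quaternion.imK_add, Quaternion.re_mul, Quaternion.imI_mul, Quaternion.imJ_mul,
    Quaternion.imK_mul, Quaternion.re_zero, Quaternion.imI_zero, Quaternion.imJ_zero,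
    Quaternion.imK_zero]
  simp [toH, jH, Complex.ext_iff, and_assoc]

theorem eq_zero_of_mul_toH_add_mul_jH_mul_toH_eq_zero {X : Type*} {ψ : X → H} (hne : ψ ≠ 0)
    {a b : ℂ} (hab : ∀ x, ψ x * toH a + ψ x * jH * toH b = 0) : a = 0 ∧ b = 0 := by
  obtain ⟨x, hx⟩ := Function.ne_iff.mp hne
  have h0 : ψ x * (toH a + jH * toH b) = 0 := by rw [mul_add, ← mul_assoc]; exact hab x
  exact toH_add_jH_mul_toH_eq_zero_iff.mp ((mul_eq_zero.mp h0).resolve_left hx)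

theorem real_monodromy_two_dimensional_general
    (Γ : AddSubgroup (ℤ × ℤ))
    (α₁ α₂ α₃ : ℤ × ℤ → H)
    (h : Γ → ℂˣ)
    (hreal : ∀ g : Γ, starRingEnd ℂ ((h g : ℂˣ) : ℂ) = ((h g : ℂˣ) : ℂ))
    (ψ : ℤ × ℤ → H) (hψ : IsHoloSection Γ α₁ α₂ α₃ h ψ) (hne : ψ ≠ 0) :
    IsHoloSection Γ α₁ α₂ α₃ h (fun x => ψ x * jH) ∧
    ∀ a b : ℂ, (fun x => ψ x * toH a + ψ x * jH * toH b) = (fun _ => (0 : H)) →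
      a = 0 ∧ b = 0 :=
  ⟨hψ.mul_right jH fun g => commute_jH_toH_of_conj_eq (hreal g),
    fun _ _ hab => eq_zero_of_mul_toH_add_mul_jH_mul_toH_eq_zero hne (congrFun hab)⟩

/-- At a real monodromy (`h = h̄`), a nonzero holomorphic section `ψ` gives rise to the
holomorphic section `ψ·j` with the same monodromy, and `ψ` and `ψ·j` are linearly
independent over `ℂ` (acting by pointwise right multiplication); hence the complex
dimension of the space of holomorphic sections is at least `2`.  This underlies the
statement in Lemma 4.17 that the involution `ρ` of the spectral curve has no fixed
points. -/
theorem real_monodromy_two_dimensional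
    (Γ : AddSubgroup (ℤ × ℤ))
    (α₁ α₂ α₃ : ℤ × ℤ → H)
    (hα₁ : ∀ x, α₁ x ≠ 0) (hα₂ : ∀ x, α₂ x ≠ 0) (hα₃ : ∀ x, α₃ x ≠ 0)
    (hper₁ : ∀ x : ℤ × ℤ, ∀ g : Γ, α₁ (x + (g : ℤ × ℤ)) = α₁ x)
    (hper₂ : ∀ x : ℤ × ℤ, ∀ g : Γ, α₂ (x + (g : ℤ × ℤ)) = α₂ x)
    (hper₃ : ∀ x : ℤ × ℤ, ∀ g : Γ, α₃ (x + (g : ℤ × ℤ)) = α₃ x)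
    (h : Γ → ℂˣ) (hhom : ∀ a b : Γ, h (a + b) = h a * h b)
    (hreal : ∀ g : Γ, starRingEnd ℂ ((h g : ℂˣ) : ℂ) = ((h g : ℂˣ) : ℂ))
    (ψ : ℤ × ℤ → H) (hψ : IsHoloSection Γ α₁ α₂ α₃ h ψ) (hne : ψ ≠ 0) :
    IsHoloSection Γ α₁ α₂ α₃ h (fun x => ψ x * jH) ∧
    ∀ a b : ℂ, (fun x => ψ x * toH a + ψ x * jH * toH b) = (fun _ => (0 : H)) →
      a = 0 ∧ b = 0 :=
  real_monodromy_two_dimensional_general Γ α₁ α₂ α₃ h hreal ψ hψ hne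
end
end

section
/- Let x₁, x₂, x₃, x₄ be pairwise distinct complex numbers and μ ∈ ℂ. Define T₀(μ), T₁(μ) : ℂ² → ℂ² by T₀(μ)(y₁, y₂) = ( ((x₃−x₂)/(x₁−x₂))y₁ + ((x₃−x₁)/(x₂−x₁))y₂ , ((x₄−x₁)/(x₂−x₁))y₂ + ((x₄−x₂)/(x₁−x₂))μy₁ ) and T₁(μ)(y₃, y₄) = ( ((x₁−x₄)/(x₃−x₄))y₃ + ((x₁−x₃)/(x₄−x₃))y₄ , ((x₂−x₃)/(x₄−x₃))y₄ + ((x₂−x₄)/(x₃−x₄))μy₃ ). Then T₁(μ) ∘ T₀(μ) = c(μ)·id_{ℂ²}, where c(μ) = ((x₁−x₃)(x₂−x₄)μ − (x₂−x₃)(x₁−x₄)) / ((x₁−x₂)(x₃−x₄)). In particular, for every μ the endomorphism T₁(μ)∘T₀(μ) has the single eigenvalue c(μ) (of multiplicity two), and c(μ) = 0 exactly for the unique value μ = (x₂−x₃)(x₁−x₄)/((x₁−x₃)(x₂−x₄)). (This is the computation in Section 4.3 showing that the transfer-matrix holonomy H(μ) of an immersed discrete torus with four vertices and regular combinatorics,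 with values x₁,…,x₄ in ℂP¹, is a scalar multiple of the identity, so that the eigenline bundle over its spectral curve has rank two.) -/
noncomputable section

/-- The transfer operator `T₀(μ)` of the four-point discrete torus (Section 4.3). -/
def T₀ (x₁ x₂ x₃ x₄ μ : ℂ) : ℂ × ℂ → ℂ × ℂ := fun y =>
  (((x₃ - x₂) / (x₁ - x₂)) * y.1 + ((x₃ - x₁) / (x₂ - x₁)) * y.2,
   ((x₄ - x₁) / (x₂ - x₁)) * y.2 + ((x₄ - x₂) / (x₁ - x₂)) * μ * y.1)

/-- The transfer operator `T₁(μ)` of the four-point discrete torus (Section 4.3). -/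
def T₁ (x₁ x₂ x₃ x₄ μ : ℂ) : ℂ × ℂ → ℂ × ℂ := fun y =>
  (((x₁ - x₄) / (x₃ - x₄)) * y.1 + ((x₁ - x₃) / (x₄ - x₃)) * y.2,
   ((x₂ - x₃) / (x₄ - x₃)) * y.2 + ((x₂ - x₄) / (x₃ - x₄)) * μ * y.1)

/-- The scalar `c(μ)` with `T₁(μ) ∘ T₀(μ) = c(μ)·id`. -/
def cScalar (x₁ x₂ x₃ x₄ μ : ℂ) : ℂ :=
  ((x₁ - x₃) * (x₂ - x₄) * μ - (x₂ - x₃) * (x₁ - x₄)) / ((x₁ - x₂) * (x₃ - x₄))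

/-- Section 4.3: the holonomy `H(μ) = T₁(μ) ∘ T₀(μ)` of the four-point discrete torus
with values `x₁, …, x₄` in `ℂP¹` is the scalar `c(μ)` times the identity; hence it has
the single eigenvalue `c(μ)` (of multiplicity two), which vanishes exactly for
`μ = (x₂−x₃)(x₁−x₄)/((x₁−x₃)(x₂−x₄))`. -/
theorem fourpoint_holonomy_scalar
    (x₁ x₂ x₃ x₄ : ℂ)
    (h₁₂ : x₁ ≠ x₂) (h₁₃ : x₁ ≠ x₃) (h₁₄ : x₁ ≠ x₄)
    (h₂₃ : x₂ ≠ x₃) (h₂₄ : x₂ ≠ x₄) (h₃₄ : x₃ ≠ x₄) (μ : ℂ) :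
    (∀ y : ℂ × ℂ, T₁ x₁ x₂ x₃ x₄ μ (T₀ x₁ x₂ x₃ x₄ μ y) = cScalar x₁ x₂ x₃ x₄ μ • y) ∧
    (∀ t : ℂ, (∃ y : ℂ × ℂ, y ≠ 0 ∧ T₁ x₁ x₂ x₃ x₄ μ (T₀ x₁ x₂ x₃ x₄ μ y) = t • y) ↔
      t = cScalar x₁ x₂ x₃ x₄ μ) ∧
    (cScalar x₁ x₂ x₃ x₄ μ = 0 ↔ μ = (x₂ - x₃) * (x₁ - x₄) / ((x₁ - x₃) * (x₂ - x₄))) := by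
  have d12 : x₁ - x₂ ≠ 0 := sub_ne_zero.mpr h₁₂
  have d21 : x₂ - x₁ ≠ 0 := sub_ne_zero.mpr h₁₂.symm
  have d34 : x₃ - x₄ ≠ 0 := sub_ne_zero.mpr h₃₄
  have d43 : x₄ - x₃ ≠ 0 := sub_ne_zero.mpr h₃₄.symm
  have d13 : x₁ - x₃ ≠ 0 := sub_ne_zero.mpr h₁₃
  have d24 : x₂ - x₄ ≠ 0 := sub_ne_zero.mpr h₂₄
  have key : ∀ y : ℂ × ℂ, T₁ x₁ x₂ x₃ x₄ μ (T₀ x₁ x₂ x₃ x₄ μ y) = cScalar x₁ x₂ x₃ x₄ μ • y := by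
    intro y
    simp only [T₀, T₁, cScalar, Prod.smul_mk, smul_eq_mul, Prod.mk.injEq, Prod.smul_def]
    constructor <;> (field_simp; ring)
  refine ⟨key, ?_, ?_⟩
  · intro t
    constructor
    · rintro ⟨y, hy, hty⟩
      rw [key y] at hty
      by_contra hne
      apply hy
      have : (cScalar x₁ x₂ x₃ x₄ μ - t) • y = 0 := by
        rw [sub_smul, hty, sub_self]
      rcases smul_eq_zero.mp this with h | h
      · exact absurd (sub_eq_zero.mp h).symm hne
      · exact h
    · rintro rfl
      exact ⟨(1, 0), by simp, key _⟩
  · unfold cScalar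
    rw [div_eq_zero_iff]
    have hden : (x₁ - x₂) * (x₃ - x₄) ≠ 0 := mul_ne_zero d12 d34
    simp only [hden, or_false]
    rw [sub_eq_zero, eq_div_iff (mul_ne_zero d13 d24)]
    constructor <;> intro h <;> linear_combination h
end
end
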